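/- Let 0 < c_L < c_H < 1 and p ∈ (0, 1), let J'(p) denote the derivative of p ↦ J(c_L, c_H, p) at p, and set y = (1−p)·(c_H/c_L − 1), so that y > 0. Then (1−p)·J'(p) + J(c_L, c_H, p) = c_L·(y − log(1 + y)), and in particular (1−p)·J'(p) + J(c_L, c_H, p) > 0. Consequently the derivative of p ↦ J(c_L, c_H, p)/(1−p) at p, which equals ((1−p)·J'(p) + J(c_L, c_H, p))/(1−p)², is strictly positive. -/

import Mathlib

/-- Partial entropy function: φ(p) = p·log p for p > 0, φ(0) = 0. -/
noncomputable def phi (p : ℝ) : ℝ := if 0 < p then p * Real.log p else 0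

/-- J(c_L, c_H, p) = p·φ(c_L) + (1−p)·φ(c_H) − φ(p·c_L + (1−p)·c_H). -/
noncomputable def J (cL cH p : ℝ) : ℝ :=
  p * phi cL + (1 - p) * phi cH - phi (p * cL + (1 - p) * cH)

/-!
Writing `m = p c_L + (1 - p) c_H` for the mixture, `J'(p) = φ(c_L) - φ(c_H) - (log m + 1)(c_L - c_H)`.
In `(1 - p) J'(p) + J(p)` the `φ(c_H)` terms cancel, and since `(1 - p)(c_H - c_L) = m - c_L`
what is left is `c_L log c_L - c_L log m + m - c_L = c_L (y - log (1 + y))` with `1 + y = m / c_L`.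
This is positive because `log (1 + y) < y` for `y ≠ 0`.
-/

open Real

lemma phi_of_pos {x : ℝ} (hx : 0 < x) : phi x = x * log x := if_pos hx

lemma hasDerivAt_phi {x : ℝ} (hx : 0 < x) : HasDerivAt phi (log x + 1) x := by
  refine (hasDerivAt_mul_log hx.ne').congr_of_eventuallyEq ?_
  filter_upwards [eventually_gt_nhds hx] with z hz using phi_of_pos hz

lemma hasDerivAt_J {cL cH p : ℝ} (hm : 0 < p * cL + (1 - p) * cH) :
    HasDerivAt (J cL cH)
      (phi cL - phi cH - (log (p * cL + (1 - p) * cH) + 1) * (cL - cH)) p := by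
  have hmix : HasDerivAt (fun q : ℝ => q * cL + (1 - q) * cH) (cL - cH) p :=
    (((hasDerivAt_id' p).mul_const cL).add
      (((hasDerivAt_id' p).const_sub 1).mul_const cH)).congr_deriv (by ring)
  have hphi := (hasDerivAt_phi hm).comp p hmix
  have hlin := ((hasDerivAt_id' p).mul_const (phi cL)).add
    (((hasDerivAt_id' p).const_sub 1).mul_const (phi cH))
  exact (hlin.sub hphi).congr_deriv (by ring)

lemma one_sub_mul_deriv_J_add_J {cL cH p : ℝ} (hcL : 0 < cL)
    (hm : 0 < p * cL + (1 - p) * cH) :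
    (1 - p) * deriv (J cL cH) p + J cL cH p
      = cL * ((1 - p) * (cH / cL - 1) - log (1 + (1 - p) * (cH / cL - 1))) := by
  have h1y : 1 + (1 - p) * (cH / cL - 1) = (p * cL + (1 - p) * cH) / cL := by
    field_simp; ring
  rw [(hasDerivAt_J hm).deriv, h1y, log_div hm.ne' hcL.ne']
  simp only [J, phi_of_pos hm, phi_of_pos hcL]
  field_simp
  ring

lemma sub_log_one_add_pos {y : ℝ} (hy : -1 < y) (hy0 : y ≠ 0) : 0 < y - log (1 + y) := by
  have := log_lt_sub_one_of_pos (x := 1 + y) (by linarith) (by simpa using hy0)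
  linarith

lemma HasDerivAt.div_one_sub {f : ℝ → ℝ} {f' p : ℝ} (hf : HasDerivAt f f' p) (hp : p ≠ 1) :
    HasDerivAt (fun q => f q / (1 - q)) (((1 - p) * f' + f p) / (1 - p) ^ 2) p :=
  (hf.div ((hasDerivAt_id' p).const_sub 1) (sub_ne_zero.2 hp.symm)).congr_deriv (by ring)

theorem J_div_one_sub_p_deriv_pos_general (cL cH p y : ℝ)
    (hcL : 0 < cL) (hLH : cL < cH)
    (hp : p ∈ Set.Ioo (0 : ℝ) 1)
    (hy : y = (1 - p) * (cH / cL - 1)) :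
    0 < y ∧
    (1 - p) * deriv (fun q => J cL cH q) p + J cL cH p
      = cL * (y - Real.log (1 + y)) ∧
    0 < (1 - p) * deriv (fun q => J cL cH q) p + J cL cH p ∧
    deriv (fun q => J cL cH q / (1 - q)) p
      = ((1 - p) * deriv (fun q => J cL cH q) p + J cL cH p) / (1 - p) ^ 2 ∧
    0 < deriv (fun q => J cL cH q / (1 - q)) p := by
  obtain ⟨hp0, hp1⟩ := hp
  have hm : 0 < p * cL + (1 - p) * cH := by nlinarith
  have hy0 : 0 < y := hy ▸ mul_pos (by linarith) (by rwa [sub_pos, one_lt_div hcL])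
  have hnum_eq := hy ▸ one_sub_mul_deriv_J_add_J hcL hm
  have hnum_pos : 0 < (1 - p) * deriv (J cL cH) p + J cL cH p :=
    hnum_eq ▸ mul_pos hcL (sub_log_one_add_pos (by linarith) hy0.ne')
  have hderiv := ((hasDerivAt_J hm).div_one_sub hp1.ne).deriv
  rw [← (hasDerivAt_J hm).deriv] at hderiv
  exact ⟨hy0, hnum_eq, hnum_pos, hderiv, hderiv ▸ div_pos hnum_pos (by positivity)⟩

/-- With y = (1−p)·(c_H/c_L − 1) > 0, the numerator (1−p)·J'(p) + J(p) of the
derivative of J(p)/(1−p) equals c_L·(y − log(1+y)) and is strictly positive;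
hence the derivative of p ↦ J(p)/(1−p), which equals
((1−p)·J'(p) + J(p))/(1−p)², is positive. -/
theorem J_div_one_sub_p_deriv_pos (cL cH p y : ℝ)
    (hcL : 0 < cL) (hLH : cL < cH) (hcH : cH < 1)
    (hp : p ∈ Set.Ioo (0 : ℝ) 1)
    (hy : y = (1 - p) * (cH / cL - 1)) :
    0 < y ∧
    (1 - p) * deriv (fun q => J cL cH q) p + J cL cH p
      = cL * (y - Real.log (1 + y)) ∧
    0 < (1 - p) * deriv (fun q => J cL cH q) p + J cL cH p ∧
    deriv (fun q => J cL cH q / (1 - q)) p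
      = ((1 - p) * deriv (fun q => J cL cH q) p + J cL cH p) / (1 - p) ^ 2 ∧
    0 < deriv (fun q => J cL cH q / (1 - q)) p :=
  J_div_one_sub_p_deriv_pos_general cL cH p y hcL hLH hp hy
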